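/- There exists a constant C > 0 such that for every integer a ≥ 8 and every real number x ≥ 1, the number of pairs of integers (m, o) with m ≥ 1, o ≥ 1 and Nm(m + o·ρ²) ≤ x is at most C·(x/a²)^(2/3). -/

import Mathlib

/-!
In the basis `1, ρ, ρ²` of `K`, multiplication by `m + oρ²` has determinant
`m³ + o³ + (a² + 2a + 6)m²o + (a² + 4a + 9)mo²`, which for `m, o ≥ 1` is at least
`a² · mo(m + o)`. The pairs counted therefore lie in the region `mo(m + o) ≤ T := x / a²`.
By symmetry it suffices to count the points with `m ≤ o`; these satisfy `m³ ≤ mo² ≤ T`, so there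
are at most `∑_{m ≤ T^{1/3}} √(T/m) ≤ 2 √T · T^{1/6} = 2 T^{2/3}` of them.

That `1, ρ, ρ²` is a basis comes from the irreducibility of `f_a`, which holds because a
rational root `n/d` in lowest terms would make `n³ - an²d - (a+3)nd² - d³` vanish, whereas
this form is odd whenever `n` and `d` are not both even.
-/

open NumberField

/-- The largest real root of `X³ - aX² - (a+3)X - 1` (for `a ≥ 7` this set of real roots
is nonempty and bounded above, so `sSup` picks out the largest root). -/
noncomputable def simplestCubicRoot (a : ℤ) : ℝ :=
  sSup {x : ℝ | x ^ 3 - (a : ℝ) * x ^ 2 - ((a : ℝ) + 3) * x - 1 = 0}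

open Polynomial

noncomputable def simplestCubic (a : ℤ) : ℚ[X] :=
  X ^ 3 - C (a : ℚ) * X ^ 2 - C ((a : ℚ) + 3) * X - 1

section SimplestCubic

variable (a : ℤ)

theorem aeval_simplestCubic {A : Type*} [CommRing A] [Algebra ℚ A] (x : A) :
    aeval x (simplestCubic a) = x ^ 3 - a * x ^ 2 - (a + 3) * x - 1 := by
  simp [simplestCubic, map_ofNat]

theorem simplestCubic_monic : (simplestCubic a).Monic := by
  unfold simplestCubic
  rw [sub_sub, sub_sub]
  exact monic_X_pow_sub (by compute_degree!)

theorem natDegree_simplestCubic : (simplestCubic a).natDegree = 3 := by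
  unfold simplestCubic
  compute_degree!

theorem simplestCubic_eval_ne_zero (q : ℚ) :
    q ^ 3 - a * q ^ 2 - (a + 3) * q - 1 ≠ 0 := by
  intro hq
  have hnum : (q.num : ℚ) = q * q.den := (Rat.mul_den_eq_num q).symm
  have hZ : q.num ^ 3 - a * q.num ^ 2 * q.den - (a + 3) * q.num * q.den ^ 2 - q.den ^ 3 = 0 := by
    have : (q.num : ℚ) ^ 3 - a * q.num ^ 2 * q.den - (a + 3) * q.num * q.den ^ 2 - q.den ^ 3
        = 0 := by
      rw [hnum]
      linear_combination (q.den : ℚ) ^ 3 * hq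
    exact_mod_cast this
  have hmod := congrArg (Int.cast : ℤ → ZMod 2) hZ
  push_cast at hmod
  have parity : ∀ n d b : ZMod 2,
      n ^ 3 - b * n ^ 2 * d - (b + 3) * n * d ^ 2 - d ^ 3 = 0 → n = 0 ∧ d = 0 := by
    decide
  obtain ⟨hn, hd⟩ := parity _ _ _ hmod
  rw [ZMod.intCast_zmod_eq_zero_iff_dvd] at hn
  rw [ZMod.natCast_eq_zero_iff] at hd
  exact Nat.not_coprime_of_dvd_of_dvd one_lt_two (Int.natCast_dvd.mp hn) hd q.reduced

theorem irreducible_simplestCubic : Irreducible (simplestCubic a) := by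
  rw [irreducible_iff_roots_eq_zero_of_degree_le_three
    (by rw [natDegree_simplestCubic]; norm_num) (by rw [natDegree_simplestCubic])]
  refine Multiset.eq_zero_of_forall_notMem fun q hq => ?_
  have := (mem_roots (simplestCubic_monic a).ne_zero).mp hq
  exact simplestCubic_eval_ne_zero a q (by simpa [simplestCubic] using this)

theorem simplestCubicRoot_spec :
    simplestCubicRoot a ^ 3 - a * simplestCubicRoot a ^ 2 - (a + 3) * simplestCubicRoot a - 1
      = 0 := by
  set f : ℝ → ℝ := fun x => x ^ 3 - a * x ^ 2 - (a + 3) * x - 1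
  have hne : (f ⁻¹' {0}).Nonempty := by
    obtain ⟨x, -, hx⟩ := intermediate_value_Icc' (show (-1 : ℝ) ≤ 0 by norm_num)
      (by fun_prop : Continuous f).continuousOn (show (0 : ℝ) ∈ Set.Icc (f 0) (f (-1)) by
        simp only [f]; constructor <;> ring_nf <;> norm_num)
    exact ⟨x, hx⟩
  have hfin : (f ⁻¹' {0}).Finite := by
    refine ((simplestCubic a).rootSet_finite ℝ).subset fun x hx => ?_
    rw [mem_rootSet, aeval_simplestCubic]
    exact ⟨(simplestCubic_monic a).ne_zero, hx⟩
  exact hne.csSup_mem hfin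

end SimplestCubic

theorem Algebra.leftMulMatrix_eq_of_mul_eq_sum {R S ι : Type*} [CommRing R] [Ring S]
    [Algebra R S] [Fintype ι] [DecidableEq ι] (b : Module.Basis ι R S) (x : S)
    (M : Matrix ι ι R) (h : ∀ j, x * b j = ∑ i, M i j • b i) :
    Algebra.leftMulMatrix b x = M := by
  ext i j
  rw [Algebra.leftMulMatrix_eq_repr_mul, h j, b.repr_sum_self]

theorem IntermediateField.exists_basis_pow_of_adjoin_eq_top {F L : Type*} [Field F] [Field L]
    [Algebra F L] {x : L} (hx : IsIntegral F x) (htop : adjoin F {x} = ⊤) {n : ℕ}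
    (hn : (minpoly F x).natDegree = n) :
    ∃ B : Module.Basis (Fin n) F L, ∀ i, B i = x ^ (i : ℕ) := by
  let pb := (adjoin.powerBasis hx).map ((equivOfEq htop).trans topEquiv)
  have hdim : pb.dim = n := by simpa [pb] using hn
  have hgen : pb.gen = x := by simp [pb, adjoin.powerBasis_gen]
  refine ⟨pb.basis.reindex (finCongr hdim), fun i => ?_⟩
  rw [Module.Basis.reindex_apply, PowerBasis.basis_eq_pow, hgen]
  rfl

theorem norm_intCast_add_intCast_mul_sq {K : Type*} [Field K] [CharZero K] {a : ℤ} {ρ : K}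
    (hρ : ρ ^ 3 - a * ρ ^ 2 - (a + 3) * ρ - 1 = 0) (htop : IntermediateField.adjoin ℚ {ρ} = ⊤)
    (m o : ℤ) :
    Algebra.norm ℚ ((m : K) + o * ρ ^ 2) = m ^ 3 + o ^ 3 + (a ^ 2 + 2 * a + 6) * m ^ 2 * o
      + (a ^ 2 + 4 * a + 9) * m * o ^ 2 := by
  have hroot : aeval ρ (simplestCubic a) = 0 := by rw [aeval_simplestCubic, hρ]
  have hint : IsIntegral ℚ ρ := ⟨_, simplestCubic_monic a, by rwa [← aeval_def]⟩
  have hmin : minpoly ℚ ρ = simplestCubic a :=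
    (minpoly.eq_of_irreducible_of_monic (irreducible_simplestCubic a) hroot
      (simplestCubic_monic a)).symm
  obtain ⟨B, hB⟩ := IntermediateField.exists_basis_pow_of_adjoin_eq_top hint htop
    (by rw [hmin, natDegree_simplestCubic])
  rw [Algebra.norm_eq_matrix_det B, Algebra.leftMulMatrix_eq_of_mul_eq_sum B _
    !![(m : ℚ), o, o * a; 0, m + o * (a + 3), o * (a ^ 2 + 3 * a + 1);
      o, o * a, m + o * (a ^ 2 + a + 3)], Matrix.det_fin_three]
  · simp only [Matrix.of_apply, Matrix.cons_val', Matrix.cons_val_zero, Matrix.cons_val_one,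
      Matrix.cons_val, Matrix.cons_val_fin_one]
    ring
  · intro j
    fin_cases j <;>
      simp only [Fin.sum_univ_three, hB, Rat.smul_def, Matrix.of_apply, Matrix.cons_val',
        Matrix.cons_val_zero, Matrix.cons_val_one, Matrix.cons_val, Matrix.cons_val_fin_one,
        Fin.isValue, Fin.val_zero, Fin.val_one, Fin.val_two] <;>
      push_cast
    · ring
    · linear_combination (o : K) * hρ
    · linear_combination (o : K) * (ρ + a) * hρ

theorem sum_Icc_one_div_sqrt_le (n : ℕ) :
    ∑ k ∈ Finset.Icc 1 n, 1 / √(k : ℝ) ≤ 2 * √(n : ℝ) := by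
  induction n with
  | zero => simp
  | succ n ih =>
    rw [Finset.sum_Icc_succ_top (by omega)]
    have hpos : 0 < √((n : ℝ) + 1) := by positivity
    have hsq : √((n : ℝ) + 1) ^ 2 = n + 1 := Real.sq_sqrt (by positivity)
    have hsq' : √(n : ℝ) ^ 2 = n := Real.sq_sqrt (by positivity)
    have step : 1 / √((n : ℝ) + 1) ≤ 2 * √((n : ℝ) + 1) - 2 * √(n : ℝ) := by
      rw [div_le_iff₀ hpos]
      -- AM-GM: `2 √n √(n+1) ≤ 2n + 1`
      nlinarith [sq_nonneg (√((n : ℝ) + 1) - √(n : ℝ))]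
    push_cast
    linarith

def mulSqRegion (T : ℝ) : Set (ℤ × ℤ) := {p | 1 ≤ p.1 ∧ p.1 ≤ p.2 ∧ (p.1 * p.2 ^ 2 : ℝ) ≤ T}

def mulAddRegion (T : ℝ) : Set (ℤ × ℤ) :=
  {p | 1 ≤ p.1 ∧ 1 ≤ p.2 ∧ (p.1 * p.2 * (p.1 + p.2) : ℝ) ≤ T}

theorem mulSqRegion_subset_biUnion (T : ℝ) :
    mulSqRegion T ⊆ (Finset.Icc 1 ⌊T ^ (3 : ℝ)⁻¹⌋₊).biUnion
      fun m => {(m : ℤ)} ×ˢ Finset.Icc (1 : ℤ) ⌊√(T / m)⌋₊ := by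
  rintro ⟨m, o⟩ ⟨hm, hmo, hT⟩
  lift m to ℕ using by omega
  lift o to ℕ using by omega
  simp only [Nat.one_le_cast, Nat.cast_le, Int.cast_natCast] at hm hmo hT
  have hm₀ : (0 : ℝ) < m := by exact_mod_cast hm
  have hmo' : (m : ℝ) ≤ o := by exact_mod_cast hmo
  have hcube : (m : ℝ) ^ 3 ≤ T := by nlinarith [mul_le_mul hmo' hmo' hm₀.le (hm₀.le.trans hmo')]
  have hsq : (o : ℝ) ^ 2 ≤ T / m := by rw [le_div_iff₀ hm₀]; linarith
  simp only [Finset.coe_biUnion, Finset.coe_Icc, Set.mem_iUnion, Finset.coe_product,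
    Finset.coe_singleton, Set.mem_prod, Set.mem_singleton_iff, Set.mem_Icc, Nat.cast_inj,
    exists_prop, Nat.one_le_cast, Nat.cast_le]
  refine ⟨m, ⟨hm, Nat.le_floor ?_⟩, rfl, hm.trans hmo, Nat.le_floor ?_⟩
  · exact (Real.le_rpow_inv_iff_of_pos hm₀.le ((by positivity : (0 : ℝ) ≤ m ^ 3).trans hcube)
      (by norm_num)).mpr (by exact_mod_cast hcube)
  · exact Real.le_sqrt_of_sq_le hsq

theorem finite_mulSqRegion (T : ℝ) : (mulSqRegion T).Finite :=
  (Finset.finite_toSet _).subset (mulSqRegion_subset_biUnion T)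

theorem ncard_mulSqRegion_le {T : ℝ} (hT : 0 ≤ T) :
    ((mulSqRegion T).ncard : ℝ) ≤ 2 * T ^ ((2 : ℝ) / 3) := by
  set M := ⌊T ^ (3 : ℝ)⁻¹⌋₊
  have hcard : (mulSqRegion T).ncard ≤ ∑ m ∈ Finset.Icc 1 M, ⌊√(T / m)⌋₊ := by
    refine (Set.ncard_le_ncard (mulSqRegion_subset_biUnion T)).trans ?_
    rw [Set.ncard_coe_finset]
    refine Finset.card_biUnion_le.trans (Finset.sum_le_sum fun m _ => ?_)
    simp
  have hM : √(M : ℝ) ≤ T ^ (6 : ℝ)⁻¹ := by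
    calc √(M : ℝ) ≤ √(T ^ (3 : ℝ)⁻¹) := Real.sqrt_le_sqrt (Nat.floor_le (by positivity))
      _ = T ^ (6 : ℝ)⁻¹ := by rw [Real.sqrt_eq_rpow, ← Real.rpow_mul hT]; norm_num
  calc ((mulSqRegion T).ncard : ℝ)
      ≤ ∑ m ∈ Finset.Icc 1 M, √T * (1 / √(m : ℝ)) := by
        refine (Nat.cast_le.mpr hcard).trans ?_
        push_cast
        refine Finset.sum_le_sum fun m _ => ?_
        rw [mul_one_div, ← Real.sqrt_div hT]
        exact Nat.floor_le (Real.sqrt_nonneg _)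
    _ ≤ √T * (2 * T ^ (6 : ℝ)⁻¹) := by
        rw [← Finset.mul_sum]
        gcongr
        exact (sum_Icc_one_div_sqrt_le M).trans (by gcongr)
    _ = 2 * T ^ ((2 : ℝ) / 3) := by
        rw [Real.sqrt_eq_rpow, mul_left_comm, ← Real.rpow_add' hT (by norm_num)]
        norm_num

theorem mulAddRegion_subset (T : ℝ) :
    mulAddRegion T ⊆ mulSqRegion T ∪ Prod.swap '' mulSqRegion T := by
  rintro ⟨m, o⟩ ⟨hm, ho, hT⟩
  dsimp only at hm ho hT
  have hm₀ : (0 : ℝ) ≤ m := by exact_mod_cast (zero_le_one.trans hm)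
  have ho₀ : (0 : ℝ) ≤ o := by exact_mod_cast (zero_le_one.trans ho)
  rcases le_total m o with hmo | hom
  · exact Or.inl ⟨hm, hmo, by nlinarith [mul_nonneg (mul_nonneg hm₀ hm₀) ho₀]⟩
  · exact Or.inr ⟨(o, m), ⟨ho, hom, by nlinarith [mul_nonneg (mul_nonneg ho₀ ho₀) hm₀]⟩, rfl⟩

theorem finite_mulAddRegion (T : ℝ) : (mulAddRegion T).Finite :=
  ((finite_mulSqRegion T).union ((finite_mulSqRegion T).image _)).subset (mulAddRegion_subset T)

theorem ncard_mulAddRegion_le {T : ℝ} (hT : 0 ≤ T) :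
    ((mulAddRegion T).ncard : ℝ) ≤ 4 * T ^ ((2 : ℝ) / 3) := by
  have hfin := (finite_mulSqRegion T).union ((finite_mulSqRegion T).image Prod.swap)
  have h := (Set.ncard_le_ncard (mulAddRegion_subset T) hfin).trans (Set.ncard_union_le _ _)
  rw [Set.ncard_image_of_injective _ Prod.swap_injective] at h
  calc ((mulAddRegion T).ncard : ℝ) ≤ 2 * (mulSqRegion T).ncard := by
        exact_mod_cast h.trans (by omega)
    _ ≤ 4 * T ^ ((2 : ℝ) / 3) := by linarith [ncard_mulSqRegion_le hT]

theorem sq_mul_mul_add_le_cubic_form {a m o : ℝ} (ha : 0 ≤ a) (hm : 0 ≤ m) (ho : 0 ≤ o) :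
    a ^ 2 * (m * o * (m + o)) ≤
      m ^ 3 + o ^ 3 + (a ^ 2 + 2 * a + 6) * m ^ 2 * o + (a ^ 2 + 4 * a + 9) * m * o ^ 2 := by
  have hmo := mul_nonneg hm ho
  nlinarith [pow_nonneg hm 3, pow_nonneg ho 3, mul_nonneg hmo hm, mul_nonneg hmo ho,
    mul_nonneg (mul_nonneg hmo hm) ha, mul_nonneg (mul_nonneg hmo ho) ha]

theorem stmt_6 :
    ∃ C : ℝ, 0 < C ∧
      ∀ (a : ℤ), 8 ≤ a →
      ∀ (K : Type) [Field K] [NumberField K] (σ : K →+* ℝ) (ρK : K),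
        σ ρK = simplestCubicRoot a →
        IntermediateField.adjoin ℚ {ρK} = ⊤ →
        ∀ x : ℝ, 1 ≤ x →
          (Set.ncard {p : ℤ × ℤ | 1 ≤ p.1 ∧ 1 ≤ p.2 ∧
              ((Algebra.norm ℚ ((p.1 : K) + (p.2 : K) * ρK ^ 2) : ℚ) : ℝ) ≤ x} : ℝ) ≤
            C * (x / (a : ℝ) ^ 2) ^ ((2 : ℝ) / 3) := by
  refine ⟨4, by norm_num, fun a ha K _ _ σ ρ hσ htop x hx => ?_⟩
  have ha₀ : (0 : ℝ) ≤ a := by exact_mod_cast (by omega : (0 : ℤ) ≤ a)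
  have hρ : ρ ^ 3 - a * ρ ^ 2 - (a + 3) * ρ - 1 = 0 :=
    σ.injective (by simpa [hσ, map_ofNat] using simplestCubicRoot_spec a)
  have hsub : {p : ℤ × ℤ | 1 ≤ p.1 ∧ 1 ≤ p.2 ∧
      ((Algebra.norm ℚ ((p.1 : K) + (p.2 : K) * ρ ^ 2) : ℚ) : ℝ) ≤ x} ⊆
      mulAddRegion (x / (a : ℝ) ^ 2) := by
    rintro ⟨m, o⟩ ⟨hm, ho, hN⟩
    refine ⟨hm, ho, ?_⟩
    dsimp only at hm ho hN ⊢
    rw [norm_intCast_add_intCast_mul_sq hρ htop] at hN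
    push_cast at hN
    rw [le_div_iff₀ (by positivity), mul_comm]
    exact (sq_mul_mul_add_le_cubic_form ha₀ (by exact_mod_cast (zero_le_one.trans hm))
      (by exact_mod_cast (zero_le_one.trans ho))).trans hN
  calc _ ≤ ((mulAddRegion (x / (a : ℝ) ^ 2)).ncard : ℝ) := by
        exact_mod_cast Set.ncard_le_ncard hsub (finite_mulAddRegion _)
    _ ≤ _ := ncard_mulAddRegion_le (by positivity)
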